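/- For integers n ≥ 3 and m ≥ 2, the F-index of the edge R-join of the cycle C_n and the path P_m is F(C_n ∨̱_R P_m) = n(m + 2)³ + mn³ + 6(m − 1)n² + 12mn + 8m + 46n − 14. -/

import Mathlib

/-- The subdivision graph `S(G)`: a new vertex is inserted into each edge of `G`
(each edge is replaced by a path of length 2). The inserted vertices form the
right summand `↥G.edgeSet`. -/
def Sgraph {V : Type*} (G : SimpleGraph V) : SimpleGraph (V ⊕ ↥G.edgeSet) where
  Adj x y :=
    match x, y with
    | Sum.inl v, Sum.inr e => v ∈ (e : Sym2 V)
    | Sum.inr e, Sum.inl v => v ∈ (e : Sym2 V)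
    | _, _ => False
  symm := by constructor; rintro (v | e) (w | f) h <;> exact h
  loopless := by constructor; rintro (v | e) h <;> exact h

/-- The graph `R(G)`: obtained from `G` by inserting a new vertex into each edge of `G`
and joining each new vertex to the end vertices of its corresponding edge. -/
def Rgraph {V : Type*} (G : SimpleGraph V) : SimpleGraph (V ⊕ ↥G.edgeSet) where
  Adj x y :=
    match x, y with
    | Sum.inl v, Sum.inl w => G.Adj v w
    | Sum.inl v, Sum.inr e => v ∈ (e : Sym2 V)
    | Sum.inr e, Sum.inl v => v ∈ (e : Sym2 V)
    | Sum.inr _, Sum.inr _ => False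
  symm := by
    refine ⟨?_⟩
    rintro (v | e) (w | f) h
    · exact G.adj_symm h
    · exact h
    · exact h
    · exact h
  loopless := by
    refine ⟨?_⟩
    rintro (v | e) h
    · exact G.irrefl h
    · exact h

/-- The graph `Q(G)`: obtained from `G` by inserting a new vertex into each edge of `G`,
then joining by edges those pairs of new vertices lying on adjacent edges of `G`. -/
def Qgraph {V : Type*} (G : SimpleGraph V) : SimpleGraph (V ⊕ ↥G.edgeSet) where
  Adj x y :=
    match x, y with
    | Sum.inl _, Sum.inl _ => False
    | Sum.inl v, Sum.inr e => v ∈ (e : Sym2 V)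
    | Sum.inr e, Sum.inl v => v ∈ (e : Sym2 V)
    | Sum.inr e, Sum.inr f => e ≠ f ∧ ∃ v, v ∈ (e : Sym2 V) ∧ v ∈ (f : Sym2 V)
  symm := by
    refine ⟨?_⟩
    rintro (v | e) (w | f) h
    · exact h
    · exact h
    · exact h
    · exact ⟨h.1.symm, by obtain ⟨v, h1, h2⟩ := h.2; exact ⟨v, h2, h1⟩⟩
  loopless := by
    refine ⟨?_⟩
    rintro (v | e) h
    · exact h
    · exact h.1 rfl

/-- The total graph `T(G)`: obtained from `G` by inserting a new vertex into each edge,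
joining each new vertex to the end vertices of its corresponding edge, and joining by
edges those pairs of new vertices lying on adjacent edges of `G`. -/
def Tgraph {V : Type*} (G : SimpleGraph V) : SimpleGraph (V ⊕ ↥G.edgeSet) where
  Adj x y :=
    match x, y with
    | Sum.inl v, Sum.inl w => G.Adj v w
    | Sum.inl v, Sum.inr e => v ∈ (e : Sym2 V)
    | Sum.inr e, Sum.inl v => v ∈ (e : Sym2 V)
    | Sum.inr e, Sum.inr f => e ≠ f ∧ ∃ v, v ∈ (e : Sym2 V) ∧ v ∈ (f : Sym2 V)
  symm := by
    refine ⟨?_⟩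
    rintro (v | e) (w | f) h
    · exact G.adj_symm h
    · exact h
    · exact h
    · exact ⟨h.1.symm, by obtain ⟨v, h1, h2⟩ := h.2; exact ⟨v, h2, h1⟩⟩
  loopless := by
    refine ⟨?_⟩
    rintro (v | e) h
    · exact G.irrefl h
    · exact h.1 rfl

/-- The disjoint union of `H` and `K` together with all edges joining a vertex `a` of `H`
with `P a` to every vertex of `K`. -/
def joinOn {A B : Type*} (H : SimpleGraph A) (K : SimpleGraph B) (P : A → Prop) :
    SimpleGraph (A ⊕ B) where
  Adj x y :=
    match x, y with
    | Sum.inl a, Sum.inl a' => H.Adj a a'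
    | Sum.inr b, Sum.inr b' => K.Adj b b'
    | Sum.inl a, Sum.inr _ => P a
    | Sum.inr _, Sum.inl a => P a
  symm := by
    refine ⟨?_⟩
    rintro (a | b) (a' | b') h
    · exact H.adj_symm h
    · exact h
    · exact h
    · exact K.adj_symm h
  loopless := by
    refine ⟨?_⟩
    rintro (a | b) h
    · exact H.irrefl h
    · exact K.irrefl h

/-- The vertex S-join `G₁ ∨̇_S G₂`: obtained from `S(G₁)` and `G₂` by joining each vertex
of `V(G₁)` to every vertex of `G₂`. -/
def vertexSJoin {V₁ V₂ : Type*} (G₁ : SimpleGraph V₁) (G₂ : SimpleGraph V₂) :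
    SimpleGraph ((V₁ ⊕ ↥G₁.edgeSet) ⊕ V₂) :=
  joinOn (Sgraph G₁) G₂ (fun x => x.isLeft)

/-- The edge S-join `G₁ ∨̱_S G₂`: obtained from `S(G₁)` and `G₂` by joining each inserted
vertex (each vertex of `I(G₁)`) to every vertex of `G₂`. -/
def edgeSJoin {V₁ V₂ : Type*} (G₁ : SimpleGraph V₁) (G₂ : SimpleGraph V₂) :
    SimpleGraph ((V₁ ⊕ ↥G₁.edgeSet) ⊕ V₂) :=
  joinOn (Sgraph G₁) G₂ (fun x => x.isRight)

/-- The vertex R-join `G₁ ∨̇_R G₂`. -/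
def vertexRJoin {V₁ V₂ : Type*} (G₁ : SimpleGraph V₁) (G₂ : SimpleGraph V₂) :
    SimpleGraph ((V₁ ⊕ ↥G₁.edgeSet) ⊕ V₂) :=
  joinOn (Rgraph G₁) G₂ (fun x => x.isLeft)

/-- The edge R-join `G₁ ∨̱_R G₂`. -/
def edgeRJoin {V₁ V₂ : Type*} (G₁ : SimpleGraph V₁) (G₂ : SimpleGraph V₂) :
    SimpleGraph ((V₁ ⊕ ↥G₁.edgeSet) ⊕ V₂) :=
  joinOn (Rgraph G₁) G₂ (fun x => x.isRight)

/-- The vertex Q-join `G₁ ∨̇_Q G₂`. -/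
def vertexQJoin {V₁ V₂ : Type*} (G₁ : SimpleGraph V₁) (G₂ : SimpleGraph V₂) :
    SimpleGraph ((V₁ ⊕ ↥G₁.edgeSet) ⊕ V₂) :=
  joinOn (Qgraph G₁) G₂ (fun x => x.isLeft)

/-- The edge Q-join `G₁ ∨̱_Q G₂`. -/
def edgeQJoin {V₁ V₂ : Type*} (G₁ : SimpleGraph V₁) (G₂ : SimpleGraph V₂) :
    SimpleGraph ((V₁ ⊕ ↥G₁.edgeSet) ⊕ V₂) :=
  joinOn (Qgraph G₁) G₂ (fun x => x.isRight)

/-- The vertex T-join `G₁ ∨̇_T G₂`. -/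
def vertexTJoin {V₁ V₂ : Type*} (G₁ : SimpleGraph V₁) (G₂ : SimpleGraph V₂) :
    SimpleGraph ((V₁ ⊕ ↥G₁.edgeSet) ⊕ V₂) :=
  joinOn (Tgraph G₁) G₂ (fun x => x.isLeft)

/-- The edge T-join `G₁ ∨̱_T G₂`. -/
def edgeTJoin {V₁ V₂ : Type*} (G₁ : SimpleGraph V₁) (G₂ : SimpleGraph V₂) :
    SimpleGraph ((V₁ ⊕ ↥G₁.edgeSet) ⊕ V₂) :=
  joinOn (Tgraph G₁) G₂ (fun x => x.isRight)

/-- Degree of a vertex in a graph on a finite vertex type. -/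
noncomputable def gdeg {V : Type*} [Finite V] (G : SimpleGraph V) (v : V) : ℕ :=
  haveI : Fintype ↥(G.neighborSet v) := Fintype.ofFinite _
  G.degree v

/-- The forgotten topological index (F-index): `F(G) = ∑_{v ∈ V(G)} d_G(v)³`. -/
noncomputable def Findex {V : Type*} [Finite V] (G : SimpleGraph V) : ℕ :=
  haveI := Fintype.ofFinite V
  ∑ v : V, gdeg G v ^ 3

/-- The first Zagreb index: `M₁(G) = ∑_{v ∈ V(G)} d_G(v)²`. -/
noncomputable def M1 {V : Type*} [Finite V] (G : SimpleGraph V) : ℕ :=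
  haveI := Fintype.ofFinite V
  ∑ v : V, gdeg G v ^ 2

/-- `M₄(G) = ∑_{v ∈ V(G)} d_G(v)⁴`. -/
noncomputable def M4 {V : Type*} [Finite V] (G : SimpleGraph V) : ℕ :=
  haveI := Fintype.ofFinite V
  ∑ v : V, gdeg G v ^ 4

/-- The hyper Zagreb index: `HM(G) = ∑_{uv ∈ E(G)} (d_G(u) + d_G(v))²`. -/
noncomputable def HM {V : Type*} [Finite V] (G : SimpleGraph V) : ℕ :=
  haveI : Fintype ↥G.edgeSet := Fintype.ofFinite _
  ∑ e : ↥G.edgeSet,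
    Sym2.lift ⟨fun u v => (gdeg G u + gdeg G v) ^ 2,
      fun u v => by dsimp only; rw [add_comm]⟩ (e : Sym2 V)

/-- The redefined Zagreb index:
`ReZM(G) = ∑_{uv ∈ E(G)} d_G(u) d_G(v) (d_G(u) + d_G(v))`. -/
noncomputable def ReZM {V : Type*} [Finite V] (G : SimpleGraph V) : ℕ :=
  haveI : Fintype ↥G.edgeSet := Fintype.ofFinite _
  ∑ e : ↥G.edgeSet,
    Sym2.lift ⟨fun u v => gdeg G u * gdeg G v * (gdeg G u + gdeg G v),
      fun u v => by dsimp only; ring⟩ (e : Sym2 V)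

/-- The number of edges of `G`. -/
noncomputable def numEdges {V : Type*} (G : SimpleGraph V) : ℕ :=
  Nat.card ↥G.edgeSet


/-!
Passing to `G₁ ∨̱_R G₂` doubles the degree of every vertex of `G₁`, gives each inserted vertex
degree `2 + |V(G₂)|`, and raises the degree of every vertex of `G₂` by `|E(G₁)|`. Hence
`F(G₁ ∨̱_R G₂) = 8 F(G₁) + |E(G₁)| (|V(G₂)| + 2)³ + ∑_{v ∈ V(G₂)} (d(v) + |E(G₁)|)³`, and for
`G₁ = C_n` (2-regular with `n` edges) and `G₂ = P_m` (two ends of degree 1, `m - 2` inner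
vertices of degree 2) the right side is the stated polynomial.
-/

open SimpleGraph

section Degree

variable {V : Type*}

lemma gdeg_eq_degree [Finite V] (G : SimpleGraph V) (v : V) [Fintype (G.neighborSet v)] :
    gdeg G v = G.degree v := by
  unfold gdeg
  congr!

lemma gdeg_eq_natCard [Finite V] (G : SimpleGraph V) (v : V) :
    gdeg G v = Nat.card (G.neighborSet v) := by
  have := Fintype.ofFinite (G.neighborSet v)
  rw [gdeg_eq_degree, Nat.card_eq_fintype_card, card_neighborSet_eq_degree]

lemma Findex_eq_sum [Fintype V] (G : SimpleGraph V) : Findex G = ∑ v, gdeg G v ^ 3 := by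
  unfold Findex
  congr!

lemma sum_gdeg_eq_two_mul_natCard_edgeSet [Fintype V] (G : SimpleGraph V) :
    ∑ v, gdeg G v = 2 * Nat.card G.edgeSet := by
  classical
  simp only [gdeg_eq_degree, sum_degrees_eq_twice_card_edges, edgeFinset_card,
    Nat.card_eq_fintype_card]

end Degree

section Join

variable {A B : Type*} [Finite A] [Finite B]

lemma natCard_neighborSet_sum (G : SimpleGraph (A ⊕ B)) (x : A ⊕ B) :
    Nat.card (G.neighborSet x) =
      Nat.card {a // G.Adj x (.inl a)} + Nat.card {b // G.Adj x (.inr b)} := by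
  rw [← Nat.card_sum]
  exact Nat.card_congr Equiv.subtypeSum

variable (H : SimpleGraph A) (K : SimpleGraph B) (P : A → Prop)

lemma gdeg_joinOn_inl_of_pos {a : A} (ha : P a) :
    gdeg (joinOn H K P) (.inl a) = gdeg H a + Nat.card B := by
  rw [gdeg_eq_natCard, natCard_neighborSet_sum, gdeg_eq_natCard]
  exact congrArg _ (Nat.card_congr (Equiv.subtypeUnivEquiv fun _ => ha))

lemma gdeg_joinOn_inl_of_neg {a : A} (ha : ¬ P a) :
    gdeg (joinOn H K P) (.inl a) = gdeg H a := by
  rw [gdeg_eq_natCard, natCard_neighborSet_sum, gdeg_eq_natCard]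
  have : IsEmpty {_b : B // P a} := ⟨fun b => ha b.2⟩
  exact Nat.add_eq_left.mpr (Nat.card_of_isEmpty (α := {_b : B // P a}))

lemma gdeg_joinOn_inr (b : B) :
    gdeg (joinOn H K P) (.inr b) = Nat.card {a // P a} + gdeg K b := by
  rw [gdeg_eq_natCard, natCard_neighborSet_sum, gdeg_eq_natCard]
  rfl

end Join

section RGraph

variable {V : Type*} [Finite V] (G : SimpleGraph V)

lemma gdeg_Rgraph_inl (v : V) : gdeg (Rgraph G) (.inl v) = 2 * gdeg G v := by
  classical
  rw [gdeg_eq_natCard, natCard_neighborSet_sum, gdeg_eq_natCard, two_mul]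
  congr 1
  exact Nat.card_congr <|
    (Equiv.subtypeSubtypeEquivSubtypeInter (· ∈ G.edgeSet) (v ∈ ·)).trans
      (G.incidenceSetEquivNeighborSet v)

lemma gdeg_Rgraph_inr (e : G.edgeSet) : gdeg (Rgraph G) (.inr e) = 2 := by
  classical
  rw [gdeg_eq_natCard, natCard_neighborSet_sum]
  have : IsEmpty {f : G.edgeSet // (Rgraph G).Adj (.inr e) (.inr f)} := ⟨fun f => f.2⟩
  rw [Nat.card_of_isEmpty (α := {f // (Rgraph G).Adj (.inr e) (.inr f)}), add_zero,
    ← Sym2.card_toFinset_of_not_isDiag _ (G.not_isDiag_of_mem_edgeSet e.2),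
    ← Nat.card_eq_finsetCard]
  exact Nat.card_congr (Equiv.subtypeEquivRight fun _ => Sym2.mem_toFinset.symm)

end RGraph

section EdgeRJoin

variable {V₁ V₂ : Type*} [Finite V₁] [Finite V₂] (G₁ : SimpleGraph V₁) (G₂ : SimpleGraph V₂)

lemma gdeg_edgeRJoin_inl_inl (v : V₁) :
    gdeg (edgeRJoin G₁ G₂) (.inl (.inl v)) = 2 * gdeg G₁ v := by
  rw [edgeRJoin, gdeg_joinOn_inl_of_neg _ _ _ (by simp), gdeg_Rgraph_inl]

lemma gdeg_edgeRJoin_inl_inr (e : G₁.edgeSet) :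
    gdeg (edgeRJoin G₁ G₂) (.inl (.inr e)) = 2 + Nat.card V₂ := by
  rw [edgeRJoin, gdeg_joinOn_inl_of_pos _ _ _ (by simp), gdeg_Rgraph_inr]

lemma gdeg_edgeRJoin_inr (b : V₂) :
    gdeg (edgeRJoin G₁ G₂) (.inr b) = Nat.card G₁.edgeSet + gdeg G₂ b := by
  rw [edgeRJoin, gdeg_joinOn_inr, Nat.card_congr Equiv.subtypeSum, Nat.card_sum]
  simp

end EdgeRJoin

theorem Findex_edgeRJoin {V₁ V₂ : Type*} [Fintype V₁] [Fintype V₂]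
    (G₁ : SimpleGraph V₁) (G₂ : SimpleGraph V₂) :
    Findex (edgeRJoin G₁ G₂) =
      8 * Findex G₁ + Nat.card G₁.edgeSet * (2 + Nat.card V₂) ^ 3 +
        ∑ b, (Nat.card G₁.edgeSet + gdeg G₂ b) ^ 3 := by
  classical
  simp only [Findex_eq_sum, Fintype.sum_sum_type, gdeg_edgeRJoin_inl_inl,
    gdeg_edgeRJoin_inl_inr, gdeg_edgeRJoin_inr, mul_pow, Finset.mul_sum, Finset.sum_const,
    Finset.card_univ, ← Nat.card_eq_fintype_card, smul_eq_mul]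
  norm_num

section CycleGraph

variable {n : ℕ}

lemma gdeg_cycleGraph (hn : 3 ≤ n) (v : Fin n) : gdeg (cycleGraph n) v = 2 := by
  obtain ⟨k, rfl⟩ := Nat.exists_eq_add_of_le' hn
  rw [gdeg_eq_degree, cycleGraph_degree_three_le]

lemma Findex_cycleGraph (hn : 3 ≤ n) : Findex (cycleGraph n) = 8 * n := by
  simp [Findex_eq_sum, gdeg_cycleGraph hn, mul_comm]

lemma natCard_edgeSet_cycleGraph (hn : 3 ≤ n) : Nat.card (cycleGraph n).edgeSet = n := by
  have h := sum_gdeg_eq_two_mul_natCard_edgeSet (cycleGraph n)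
  simp only [gdeg_cycleGraph hn, Finset.sum_const, Finset.card_univ, Fintype.card_fin,
    smul_eq_mul] at h
  omega

end CycleGraph

section PathGraph

variable (k : ℕ)

lemma gdeg_pathGraph_zero : gdeg (pathGraph (k + 2)) 0 = 1 := by
  have : (pathGraph (k + 2)).neighborSet 0 = {1} := by
    ext u
    simp only [mem_neighborSet, pathGraph_adj, Set.mem_singleton_iff, Fin.ext_iff, Fin.val_zero,
      Fin.val_one]
    omega
  rw [gdeg_eq_natCard, this, Nat.card_unique]

lemma gdeg_pathGraph_last : gdeg (pathGraph (k + 2)) (Fin.last _) = 1 := by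
  have : (pathGraph (k + 2)).neighborSet (Fin.last _) = {(Fin.last k).castSucc} := by
    ext u
    simp only [mem_neighborSet, pathGraph_adj, Set.mem_singleton_iff, Fin.ext_iff, Fin.val_last,
      Fin.val_castSucc]
    omega
  rw [gdeg_eq_natCard, this, Nat.card_unique]

lemma gdeg_pathGraph_castSucc_succ (i : Fin k) :
    gdeg (pathGraph (k + 2)) i.castSucc.succ = 2 := by
  have : (pathGraph (k + 2)).neighborSet i.castSucc.succ =
      {i.castSucc.castSucc, i.succ.succ} := by
    ext u
    simp only [mem_neighborSet, pathGraph_adj, Set.mem_insert_iff, Set.mem_singleton_iff,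
      Fin.ext_iff, Fin.val_succ, Fin.val_castSucc]
    omega
  rw [gdeg_eq_natCard, this, Nat.card_coe_set_eq, Set.ncard_pair (by simp [Fin.ext_iff]; omega)]

lemma sum_pathGraph_gdeg (f : ℕ → ℕ) :
    ∑ b, f (gdeg (pathGraph (k + 2)) b) = 2 * f 1 + k * f 2 := by
  rw [Fin.sum_univ_succ, Fin.sum_univ_castSucc]
  simp only [gdeg_pathGraph_zero, gdeg_pathGraph_castSucc_succ, Fin.succ_last,
    gdeg_pathGraph_last, Finset.sum_const, Finset.card_univ, Fintype.card_fin, smul_eq_mul]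
  ring

end PathGraph

theorem Findex_edgeRJoin_ex15 (n m : ℕ) (hn : 3 ≤ n) (hm : 2 ≤ m) :
    (Findex (edgeRJoin (SimpleGraph.cycleGraph n) (SimpleGraph.pathGraph m)) : ℤ) =
      (n : ℤ) * ((m : ℤ) + 2) ^ 3 + (m : ℤ) * (n : ℤ) ^ 3 + 6 * ((m : ℤ) - 1) * (n : ℤ) ^ 2 + 12 * (m : ℤ) * (n : ℤ) + 8 * (m : ℤ) + 46 * (n : ℤ) - 14 := by
  obtain ⟨k, rfl⟩ := Nat.exists_eq_add_of_le' hm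
  rw [Findex_edgeRJoin, Findex_cycleGraph hn, natCard_edgeSet_cycleGraph hn, Nat.card_fin,
    sum_pathGraph_gdeg k (fun d => (n + d) ^ 3)]
  push_cast
  ring
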